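/- Let P ⊂ ℝⁿ be a compact convex polytope with nonempty interior containing the origin, let θ be its extremal affine function, and set ℓ(x) := (1 − θ(x))/vol(P). Then ℓ(0) = ∫_P ℓ(x)² dx. In particular ℓ(0) > 0, i.e., θ(0) < 1. -/

import Mathlib

open MeasureTheory

/-- `P ⊆ ℝⁿ` is a (compact convex) polytope: the convex hull of finitely many points. -/
def IsPolytope {n : ℕ} (P : Set (Fin n → ℝ)) : Prop :=
  ∃ V : Finset (Fin n → ℝ), P = convexHull ℝ (V : Set (Fin n → ℝ))

/-- `θ : ℝⁿ → ℝ` is an affine function. -/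
def IsAffineFn {n : ℕ} (θ : (Fin n → ℝ) → ℝ) : Prop :=
  ∃ (a : Fin n → ℝ) (c : ℝ), ∀ x, θ x = (∑ i, a i * x i) + c

/-- `θ` is the extremal affine function of `P`: it is affine, `∫_P θ = 0`, and
`∫_P xᵢ θ = ∫_P xᵢ` for every `i`. -/
def IsExtremalAffine {n : ℕ} (P : Set (Fin n → ℝ)) (θ : (Fin n → ℝ) → ℝ) : Prop :=
  IsAffineFn θ ∧ (∫ x in P, θ x) = 0 ∧
    ∀ i : Fin n, (∫ x in P, x i * θ x) = ∫ x in P, x i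

/-!
Write `θ x = a · x + c`, so `c = θ 0`. The moment conditions give `∫_P (a · x) θ = ∫_P a · x`,
and `a · x = θ - c` with `∫_P θ = 0`, hence `∫_P θ² = -c vol(P)` and
`∫_P (1 - θ)² = vol(P) - 2 ∫_P θ + ∫_P θ² = (1 - θ 0) vol(P)`, which is `ℓ(0) = ∫_P ℓ²` after
dividing by `vol(P)²`. Since `∫_P (1 - θ) = vol(P) ≠ 0`, the function `1 - θ` does not vanish
a.e. on `P`, so `∫_P (1 - θ)² > 0`.
-/

lemma IsPolytope.isCompact {n : ℕ} {P : Set (Fin n → ℝ)} (hP : IsPolytope P) : IsCompact P := by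
  obtain ⟨V, rfl⟩ := hP
  exact V.finite_toSet.isCompact_convexHull ℝ

lemma IsAffineFn.continuous {n : ℕ} {θ : (Fin n → ℝ) → ℝ} (hθ : IsAffineFn θ) : Continuous θ := by
  obtain ⟨a, c, ha⟩ := hθ
  rw [funext ha]
  fun_prop

lemma integral_sq_pos_of_integral_ne_zero {α : Type*} [MeasurableSpace α] {μ : Measure α}
    {f : α → ℝ} (hf : Integrable (fun x ↦ f x ^ 2) μ) (h : ∫ x, f x ∂μ ≠ 0) :
    0 < ∫ x, f x ^ 2 ∂μ := by
  refine (integral_nonneg fun x ↦ sq_nonneg (f x)).lt_of_ne' fun hzero ↦ h ?_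
  have hsq : (fun x ↦ f x ^ 2) =ᵐ[μ] 0 :=
    (integral_eq_zero_iff_of_nonneg (fun x ↦ sq_nonneg (f x)) hf).1 hzero
  refine integral_eq_zero_of_ae ?_
  filter_upwards [hsq] with x hx
  exact pow_eq_zero_iff two_ne_zero |>.1 hx

section MomentConditions

variable {n : ℕ} {μ : Measure (Fin n → ℝ)} [IsFiniteMeasureOnCompacts μ] {K : Set (Fin n → ℝ)}
  {θ : (Fin n → ℝ) → ℝ} {a : Fin n → ℝ} {c : ℝ}

lemma setIntegral_linear_mul_eq (hK : IsCompact K) (hθ : Continuous θ)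
    (hmom : ∀ i, ∫ x in K, x i * θ x ∂μ = ∫ x in K, x i ∂μ) :
    ∫ x in K, (∑ i, a i * x i) * θ x ∂μ = ∫ x in K, ∑ i, a i * x i ∂μ := by
  simp_rw [Finset.sum_mul, mul_assoc]
  rw [integral_finsetSum, integral_finsetSum]
  · simp_rw [integral_const_mul, hmom]
  all_goals exact fun i _ ↦ (by fun_prop : Continuous _).continuousOn.integrableOn_compact hK

lemma setIntegral_sq_eq_neg_mul_measureReal (hK : IsCompact K)
    (ha : ∀ x, θ x = ∑ i, a i * x i + c) (hmean : ∫ x in K, θ x ∂μ = 0)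
    (hmom : ∀ i, ∫ x in K, x i * θ x ∂μ = ∫ x in K, x i ∂μ) :
    ∫ x in K, θ x ^ 2 ∂μ = -(c * μ.real K) := by
  have hθ : Continuous θ := IsAffineFn.continuous ⟨a, c, ha⟩
  have hsq : ∀ x, θ x ^ 2 = (∑ i, a i * x i) * θ x + c * θ x := fun x ↦ by
    nth_rewrite 1 [sq, ha x]
    ring
  have hlin : ∀ x, ∑ i, a i * x i = θ x - c := fun x ↦ by rw [ha x, add_sub_cancel_right]
  simp_rw [hsq]
  rw [integral_add, setIntegral_linear_mul_eq hK hθ hmom, integral_const_mul, hmean, mul_zero,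
    add_zero]
  · simp_rw [hlin]
    rw [integral_sub, hmean, setIntegral_const, smul_eq_mul, zero_sub, mul_comm]
    all_goals exact (by fun_prop : Continuous _).continuousOn.integrableOn_compact hK
  all_goals exact (by fun_prop : Continuous _).continuousOn.integrableOn_compact hK

lemma setIntegral_one_sub_eq_measureReal (hK : IsCompact K) (hθ : Continuous θ)
    (hmean : ∫ x in K, θ x ∂μ = 0) : ∫ x in K, (1 - θ x) ∂μ = μ.real K := by
  rw [integral_sub (continuous_const.continuousOn.integrableOn_compact hK)
    (hθ.continuousOn.integrableOn_compact hK), hmean, setIntegral_const, smul_eq_mul, mul_one,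
    sub_zero]

lemma setIntegral_one_sub_sq_eq (hK : IsCompact K)
    (ha : ∀ x, θ x = ∑ i, a i * x i + c) (hmean : ∫ x in K, θ x ∂μ = 0)
    (hmom : ∀ i, ∫ x in K, x i * θ x ∂μ = ∫ x in K, x i ∂μ) :
    ∫ x in K, (1 - θ x) ^ 2 ∂μ = (1 - c) * μ.real K := by
  have hθ : Continuous θ := IsAffineFn.continuous ⟨a, c, ha⟩
  have hexpand : ∀ x, (1 - θ x) ^ 2 = (1 - θ x) - θ x + θ x ^ 2 := fun x ↦ by ring
  simp_rw [hexpand]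
  rw [integral_add, integral_sub, setIntegral_one_sub_eq_measureReal hK hθ hmean, hmean,
    setIntegral_sq_eq_neg_mul_measureReal hK ha hmean hmom]
  · ring
  all_goals exact (by fun_prop : Continuous _).continuousOn.integrableOn_compact hK

end MomentConditions

theorem extremal_affine_ell_zero_general {n : ℕ} (P : Set (Fin n → ℝ))
    (hP : IsPolytope P) (hint : (interior P).Nonempty)
    (θ : (Fin n → ℝ) → ℝ) (hθ : IsExtremalAffine P θ) :
    (1 - θ 0) / (volume P).toReal
        = (∫ x in P, ((1 - θ x) / (volume P).toReal) ^ 2) ∧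
    0 < (1 - θ 0) / (volume P).toReal ∧ θ 0 < 1 := by
  obtain ⟨haff, hmean, hmom⟩ := hθ
  have hθ : Continuous θ := haff.continuous
  obtain ⟨a, c, ha⟩ := haff
  have hK : IsCompact P := hP.isCompact
  have hV : 0 < volume.real P :=
    ENNReal.toReal_pos (Measure.measure_pos_of_nonempty_interior _ hint).ne' hK.measure_lt_top.ne
  rw [← measureReal_def]
  have hθ0 : θ 0 = c := by simp [ha]
  have hsq := setIntegral_one_sub_sq_eq (μ := volume) hK ha hmean hmom
  have hpos : 0 < ∫ x in P, (1 - θ x) ^ 2 := by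
    refine integral_sq_pos_of_integral_ne_zero
      ((by fun_prop : Continuous fun x ↦ (1 - θ x) ^ 2).continuousOn.integrableOn_compact hK) ?_
    rw [setIntegral_one_sub_eq_measureReal hK hθ hmean]
    exact hV.ne'
  have hlt : θ 0 < 1 := by
    rw [hsq, ← hθ0] at hpos
    linarith [pos_of_mul_pos_left hpos hV.le]
  refine ⟨?_, div_pos (sub_pos.2 hlt) hV, hlt⟩
  simp_rw [div_pow, integral_div, hsq, hθ0]
  field_simp

/-- With `ℓ(x) = (1 - θ(x))/vol(P)`, one has `ℓ(0) = ∫_P ℓ²`; in particular `ℓ(0) > 0`,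
i.e. `θ(0) < 1`. -/
theorem extremal_affine_ell_zero {n : ℕ} (P : Set (Fin n → ℝ))
    (hP : IsPolytope P) (hint : (interior P).Nonempty) (h0 : (0 : Fin n → ℝ) ∈ P)
    (θ : (Fin n → ℝ) → ℝ) (hθ : IsExtremalAffine P θ) :
    (1 - θ 0) / (volume P).toReal
        = (∫ x in P, ((1 - θ x) / (volume P).toReal) ^ 2) ∧
    0 < (1 - θ 0) / (volume P).toReal ∧ θ 0 < 1 :=
  extremal_affine_ell_zero_general P hP hint θ hθ
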